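/- arXiv:quant-ph/0301171 — 6 statements merged into one kernel-verified Lean document; each statement's English description precedes it below -/
import Mathlib

section
/- The square of the Bell operator satisfies B² = 4·I₄ − [a₁,b₁]⊗[a₂,b₂], where [x,y] = xy − yx is the commutator. -/
open Matrix Kronecker

namespace Matrix

variable {α l m n p : Type*}

theorem sub_kronecker [NonUnitalNonAssocRing α] (A₁ A₂ : Matrix l m α) (B : Matrix n p α) :
    (A₁ - A₂) ⊗ₖ B = A₁ ⊗ₖ B - A₂ ⊗ₖ B := by
  ext ⟨i, j⟩ ⟨k, l⟩
  simp [sub_mul]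

theorem kronecker_sub [NonUnitalNonAssocRing α] (A : Matrix l m α) (B₁ B₂ : Matrix n p α) :
    A ⊗ₖ (B₁ - B₂) = A ⊗ₖ B₁ - A ⊗ₖ B₂ := by
  ext ⟨i, j⟩ ⟨k, l⟩
  simp [mul_sub]

/-- Landau's identity for the CHSH operator. -/
theorem chsh_kronecker_mul_self [CommRing α] [Fintype m] [DecidableEq m] [Fintype n]
    [DecidableEq n] {a₁ b₁ : Matrix m m α} {a₂ b₂ : Matrix n n α}
    (ha₁ : a₁ * a₁ = 1) (hb₁ : b₁ * b₁ = 1) (ha₂ : a₂ * a₂ = 1) (hb₂ : b₂ * b₂ = 1) :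
    (a₁ ⊗ₖ a₂ + a₁ ⊗ₖ b₂ + b₁ ⊗ₖ a₂ - b₁ ⊗ₖ b₂) * (a₁ ⊗ₖ a₂ + a₁ ⊗ₖ b₂ + b₁ ⊗ₖ a₂ - b₁ ⊗ₖ b₂)
      = (4 : α) • (1 : Matrix (m × n) (m × n) α) - (a₁ * b₁ - b₁ * a₁) ⊗ₖ (a₂ * b₂ - b₂ * a₂) := by
  simp only [add_mul, sub_mul, mul_add, mul_sub, ← mul_kronecker_mul, ha₁, hb₁, ha₂, hb₂,
    sub_kronecker, kronecker_sub, one_kronecker_one]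
  rw [show (4 : α) = 1 + 1 + 1 + 1 by norm_num]
  simp only [add_smul, one_smul]
  abel

end Matrix

theorem bell_operator_sq_general (a₁ b₁ a₂ b₂ : Matrix (Fin 2) (Fin 2) ℂ)
    (ha₁sq : a₁ * a₁ = 1) (hb₁sq : b₁ * b₁ = 1)
    (ha₂sq : a₂ * a₂ = 1) (hb₂sq : b₂ * b₂ = 1) :
    let B := a₁ ⊗ₖ a₂ + a₁ ⊗ₖ b₂ + b₁ ⊗ₖ a₂ - b₁ ⊗ₖ b₂
    B * B = (4 : ℂ) • (1 : Matrix (Fin 2 × Fin 2) (Fin 2 × Fin 2) ℂ)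
      - (a₁ * b₁ - b₁ * a₁) ⊗ₖ (a₂ * b₂ - b₂ * a₂) :=
  chsh_kronecker_mul_self ha₁sq hb₁sq ha₂sq hb₂sq

/-- The square of the Bell operator: `B² = 4·I₄ − [a₁,b₁] ⊗ [a₂,b₂]`. -/
theorem bell_operator_sq (a₁ b₁ a₂ b₂ : Matrix (Fin 2) (Fin 2) ℂ)
    (ha₁ : a₁.IsHermitian) (hb₁ : b₁.IsHermitian)
    (ha₂ : a₂.IsHermitian) (hb₂ : b₂.IsHermitian)
    (ha₁sq : a₁ * a₁ = 1) (hb₁sq : b₁ * b₁ = 1)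
    (ha₂sq : a₂ * a₂ = 1) (hb₂sq : b₂ * b₂ = 1) :
    let B := a₁ ⊗ₖ a₂ + a₁ ⊗ₖ b₂ + b₁ ⊗ₖ a₂ - b₁ ⊗ₖ b₂
    B * B = (4 : ℂ) • (1 : Matrix (Fin 2 × Fin 2) (Fin 2 × Fin 2) ℂ)
      - (a₁ * b₁ - b₁ * a₁) ⊗ₖ (a₂ * b₂ - b₂ * a₂) :=
  bell_operator_sq_general a₁ b₁ a₂ b₂ ha₁sq hb₁sq ha₂sq hb₂sq
end

section
/- The eigenvalues of the Bell operator B come in pairs ±ξ₁, ±ξ₂ with ξ₁² + ξ₂² = 8; in particular every eigenvalue ξ of B satisfies |ξ| ≤ 2√2. -/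
open Matrix Kronecker

lemma bell_ms34 {α : Type*} (a b c d : α) : ({a,b,c,d} : Multiset α) = {a,b,d,c} := by
  simp only [Multiset.insert_eq_cons, ← Multiset.cons_zero]
  exact congrArg _ (congrArg _ (Multiset.cons_swap _ _ _))

lemma bell_ms23 {α : Type*} (a b c d : α) : ({a,b,c,d} : Multiset α) = {a,c,b,d} := by
  simp only [Multiset.insert_eq_cons, ← Multiset.cons_zero]
  exact congrArg _ (Multiset.cons_swap _ _ _)

lemma bell_key_id (w x y z : ℝ) (h1 : w+x+y+z = 0) (h3 : w^3+x^3+y^3+z^3 = 0) :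
    w*(w+x)*(w+y)*(w+z) = 0 := by
  linear_combination (w^3 - (w/3)*(w+x+y+z)^2 + w*(w*x+w*y+w*z+x*y+x*z+y*z)) * h1 + (w/3) * h3

lemma bell_quad_pairs (w x y z : ℝ) (h1 : w+x+y+z = 0) (h3 : w^3+x^3+y^3+z^3 = 0)
    (h2 : w^2+x^2+y^2+z^2 = 16) :
    ∃ ξ₁ ξ₂ : ℝ, ξ₁^2+ξ₂^2 = 8 ∧ ({w,x,y,z} : Multiset ℝ) = {ξ₁,ξ₂,-ξ₂,-ξ₁} := by
  have key := bell_key_id w x y z h1 h3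
  rcases mul_eq_zero.mp key with key | hz
  · rcases mul_eq_zero.mp key with key | hy
    · rcases mul_eq_zero.mp key with hw | hx
      · -- w = 0
        have key2 := bell_key_id x w y z (by linarith) (by linarith)
        rw [hw] at key2
        have hx0 : x = 0 ∨ (x + y = 0 ∨ x + z = 0) := by
          rcases mul_eq_zero.mp key2 with key2 | hz'
          · rcases mul_eq_zero.mp key2 with key2 | hy'
            · rcases mul_eq_zero.mp key2 with hx' | hx0
              · exact Or.inl hx'
              · exact Or.inl (by linarith)
            · exact Or.inr (Or.inl hy')
          · exact Or.inr (Or.inr hz')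
        rcases hx0 with hx0 | hy0 | hz0
        · -- x = 0, y + z = 0
          have hzy : z = -y := by linarith
          refine ⟨0, y, by linear_combination (1/2)*h2 - (w/2)*hw - (x/2)*hx0 + ((y-z)/2)*hzy, ?_⟩
          rw [hw, hx0, hzy, neg_zero, bell_ms23 (0:ℝ) 0 y (-y), bell_ms34 (0:ℝ) y 0 (-y)]
        · -- x + y = 0, so z = 0
          have hz0 : z = 0 := by linarith
          have hyx : y = -x := by linarith
          refine ⟨0, x, by linear_combination (1/2)*h2 - (w/2)*hw - (z/2)*hz0 + ((x-y)/2)*hyx, ?_⟩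
          rw [hw, hz0, hyx, neg_zero]
        · -- x + z = 0, so y = 0
          have hy0 : y = 0 := by linarith
          have hzx : z = -x := by linarith
          refine ⟨0, x, by linear_combination (1/2)*h2 - (w/2)*hw - (y/2)*hy0 + ((x-z)/2)*hzx, ?_⟩
          rw [hw, hy0, hzx, neg_zero, bell_ms34 (0:ℝ) x 0 (-x)]
      · -- x = -w, y + z = 0
        have hx' : x = -w := by linarith
        have hz' : z = -y := by linarith
        refine ⟨w, y, by linear_combination (1/2)*h2 + ((w-x)/2)*hx' + ((y-z)/2)*hz', ?_⟩
        rw [hx', hz', bell_ms23 w (-w) y (-y), bell_ms34 w y (-w) (-y)]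
    · -- y = -w, x + z = 0
      have hy' : y = -w := by linarith
      have hz' : z = -x := by linarith
      refine ⟨w, x, by linear_combination (1/2)*h2 + ((w-y)/2)*hy' + ((x-z)/2)*hz', ?_⟩
      rw [hy', hz', bell_ms34 w x (-w) (-x)]
  · -- z = -w, x + y = 0
    have hz' : z = -w := by linarith
    have hy' : y = -x := by linarith
    refine ⟨w, x, by linear_combination (1/2)*h2 + ((w-z)/2)*hz' + ((x-y)/2)*hy', ?_⟩
    rw [hz', hy']

lemma bell_trace_pow_eq {m : Type*} [Fintype m] [DecidableEq m] (A : Matrix m m ℂ)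
    (hA : A.IsHermitian) (k : ℕ) :
    (A ^ k).trace = ∑ i, (hA.eigenvalues i : ℂ) ^ k := by
  have hsp := hA.spectral_theorem
  set U : Matrix m m ℂ := (hA.eigenvectorUnitary : Matrix m m ℂ) with hUdef
  set D : Matrix m m ℂ := Matrix.diagonal (RCLike.ofReal ∘ hA.eigenvalues) with hDdef
  have hU1 : star U * U = 1 := Matrix.mem_unitaryGroup_iff'.mp hA.eigenvectorUnitary.2
  have hU2 : U * star U = 1 := Matrix.mem_unitaryGroup_iff.mp hA.eigenvectorUnitary.2
  have cancel : ∀ X : Matrix m m ℂ, star U * (U * X) = X := fun X => by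
    rw [← Matrix.mul_assoc, hU1, Matrix.one_mul]
  have hpow : A ^ k = U * D ^ k * star U := by
    induction k with
    | zero => simp [hU2]
    | succ n ih =>
        calc A ^ (n+1) = A ^ n * A := pow_succ A n
        _ = (U * D ^ n * star U) * (U * D * star U) := by rw [ih, hsp, Unitary.conjStarAlgAut_apply]
        _ = U * D ^ (n+1) * star U := by
            simp only [Matrix.mul_assoc, cancel, pow_succ]
  rw [hpow, Matrix.trace_mul_cycle, hU1, Matrix.one_mul, hDdef,
    Matrix.diagonal_pow, Matrix.trace_diagonal]
  simp

/-- The eigenvalues of the Bell operator come in pairs `±ξ₁, ±ξ₂` with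
`ξ₁² + ξ₂² = 8`; in particular every eigenvalue has absolute value `≤ 2√2`. -/
theorem bell_operator_eigenvalues (a₁ b₁ a₂ b₂ : Matrix (Fin 2) (Fin 2) ℂ)
    (ha₁ : a₁.IsHermitian) (hb₁ : b₁.IsHermitian)
    (ha₂ : a₂.IsHermitian) (hb₂ : b₂.IsHermitian)
    (ha₁sq : a₁ * a₁ = 1) (hb₁sq : b₁ * b₁ = 1)
    (ha₂sq : a₂ * a₂ = 1) (hb₂sq : b₂ * b₂ = 1)
    (ha₁tr : a₁.trace = 0) (hb₁tr : b₁.trace = 0)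
    (ha₂tr : a₂.trace = 0) (hb₂tr : b₂.trace = 0)
    (B : Matrix (Fin 2 × Fin 2) (Fin 2 × Fin 2) ℂ)
    (hBdef : B = a₁ ⊗ₖ a₂ + a₁ ⊗ₖ b₂ + b₁ ⊗ₖ a₂ - b₁ ⊗ₖ b₂)
    (hB : B.IsHermitian) :
    ∃ ξ₁ ξ₂ : ℝ, ξ₁ ^ 2 + ξ₂ ^ 2 = 8 ∧
      (Finset.univ.val.map hB.eigenvalues) = ({ξ₁, ξ₂, -ξ₂, -ξ₁} : Multiset ℝ) ∧
      ∀ i, |hB.eigenvalues i| ≤ 2 * Real.sqrt 2 := by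
  have hc1 : (b₁*a₁).trace = (a₁*b₁).trace := Matrix.trace_mul_comm b₁ a₁
  have hc2 : (b₂*a₂).trace = (a₂*b₂).trace := Matrix.trace_mul_comm b₂ a₂
  -- trace computations
  have t1 : B.trace = 0 := by
    simp [hBdef, Matrix.trace_kronecker, ha₁tr, hb₁tr]
  have t2 : (B*B).trace = 16 := by
    simp only [hBdef, add_mul, mul_add, sub_mul, mul_sub, ← Matrix.mul_kronecker_mul,
      ha₁sq, hb₁sq, ha₂sq, hb₂sq, Matrix.trace_add, Matrix.trace_sub, Matrix.trace_kronecker,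
      Matrix.trace_one, hc1, hc2]
    push_cast [Fintype.card_fin]
    ring
  have t3 : (B*B*B).trace = 0 := by
    have w1 : ((a₁*b₁)*a₁).trace = 0 := by
      rw [Matrix.trace_mul_cycle, ha₁sq, Matrix.one_mul]; exact hb₁tr
    have w2 : ((a₁*b₁)*b₁).trace = 0 := by
      rw [Matrix.mul_assoc, hb₁sq, Matrix.mul_one]; exact ha₁tr
    have w3 : ((b₁*a₁)*a₁).trace = 0 := by
      rw [Matrix.mul_assoc, ha₁sq, Matrix.mul_one]; exact hb₁tr
    have w4 : ((b₁*a₁)*b₁).trace = 0 := by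
      rw [Matrix.trace_mul_cycle, hb₁sq, Matrix.one_mul]; exact ha₁tr
    have v1 : ((a₂*b₂)*a₂).trace = 0 := by
      rw [Matrix.trace_mul_cycle, ha₂sq, Matrix.one_mul]; exact hb₂tr
    have v2 : ((a₂*b₂)*b₂).trace = 0 := by
      rw [Matrix.mul_assoc, hb₂sq, Matrix.mul_one]; exact ha₂tr
    have v3 : ((b₂*a₂)*a₂).trace = 0 := by
      rw [Matrix.mul_assoc, ha₂sq, Matrix.mul_one]; exact hb₂tr
    have v4 : ((b₂*a₂)*b₂).trace = 0 := by
      rw [Matrix.trace_mul_cycle, hb₂sq, Matrix.one_mul]; exact ha₂tr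
    simp only [hBdef, add_mul, mul_add, sub_mul, mul_sub, ← Matrix.mul_kronecker_mul,
      ha₁sq, hb₁sq, ha₂sq, hb₂sq, Matrix.one_mul, Matrix.mul_one,
      Matrix.trace_add, Matrix.trace_sub, Matrix.trace_kronecker,
      w1, w2, w3, w4, v1, v2, v3, v4, ha₁tr, hb₁tr, ha₂tr, hb₂tr,
      zero_mul, mul_zero]
    ring
  -- eigenvalue power sums
  have e1 : ∑ i, hB.eigenvalues i = 0 := by
    have h := bell_trace_pow_eq B hB 1
    rw [pow_one, t1] at h
    have h' : ((∑ i, hB.eigenvalues i : ℝ) : ℂ) = 0 := by push_cast; simpa using h.symm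
    exact_mod_cast h'
  have e2 : ∑ i, (hB.eigenvalues i)^2 = 16 := by
    have h := bell_trace_pow_eq B hB 2
    rw [pow_two, t2] at h
    have h' : ((∑ i, (hB.eigenvalues i)^2 : ℝ) : ℂ) = 16 := by push_cast; simpa using h.symm
    exact_mod_cast h'
  have e3 : ∑ i, (hB.eigenvalues i)^3 = 0 := by
    have h := bell_trace_pow_eq B hB 3
    rw [show B^3 = B*B*B by rw [pow_succ, pow_succ, pow_one], t3] at h
    have h' : ((∑ i, (hB.eigenvalues i)^3 : ℝ) : ℂ) = 0 := by push_cast; simpa using h.symm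
    exact_mod_cast h'
  set f := hB.eigenvalues with hf
  have hsum1 : f (0,0) + f (0,1) + f (1,0) + f (1,1) = 0 := by
    rw [Fintype.sum_prod_type] at e1
    simp only [Fin.sum_univ_two] at e1
    linarith
  have hsum2 : (f (0,0))^2 + (f (0,1))^2 + (f (1,0))^2 + (f (1,1))^2 = 16 := by
    rw [Fintype.sum_prod_type] at e2
    simp only [Fin.sum_univ_two] at e2
    linarith
  have hsum3 : (f (0,0))^3 + (f (0,1))^3 + (f (1,0))^3 + (f (1,1))^3 = 0 := by
    rw [Fintype.sum_prod_type] at e3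
    simp only [Fin.sum_univ_two] at e3
    linarith
  have huniv : (Finset.univ.val : Multiset (Fin 2 × Fin 2)) =
      {((0:Fin 2),(0:Fin 2)),(0,1),(1,0),(1,1)} := by decide
  have hmap : Finset.univ.val.map f = ({f (0,0), f (0,1), f (1,0), f (1,1)} : Multiset ℝ) := by
    rw [huniv]
    simp [Multiset.insert_eq_cons]
  obtain ⟨ξ₁, ξ₂, hξ, hperm⟩ :=
    bell_quad_pairs (f (0,0)) (f (0,1)) (f (1,0)) (f (1,1)) hsum1 hsum3 hsum2
  have hbnd : ∀ v : ℝ, v^2 ≤ 8 → |v| ≤ 2*Real.sqrt 2 := by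
    intro v hv
    have h8 : Real.sqrt 8 = 2 * Real.sqrt 2 := by
      rw [show (8:ℝ) = 2^2*2 by norm_num, Real.sqrt_mul (by positivity), Real.sqrt_sq (by norm_num)]
    calc |v| = Real.sqrt (v^2) := (Real.sqrt_sq_eq_abs v).symm
    _ ≤ Real.sqrt 8 := Real.sqrt_le_sqrt hv
    _ = 2*Real.sqrt 2 := h8
  have hmapeq : Finset.univ.val.map f = ({ξ₁, ξ₂, -ξ₂, -ξ₁} : Multiset ℝ) := hmap.trans hperm
  refine ⟨ξ₁, ξ₂, hξ, hmapeq, ?_⟩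
  intro i
  have hmem : f i ∈ Finset.univ.val.map f :=
    Multiset.mem_map.mpr ⟨i, Finset.mem_val.mpr (Finset.mem_univ i), rfl⟩
  rw [hmapeq] at hmem
  simp only [Multiset.insert_eq_cons, Multiset.mem_cons, Multiset.mem_singleton] at hmem
  rcases hmem with h | h | h | h <;> rw [h] <;> apply hbnd <;>
    nlinarith [sq_nonneg ξ₁, sq_nonneg ξ₂]
end

section
/- For any density matrix ρ on ℂ⁴ and any Bell operator B (with eigenvalues ξ₁, ξ₂, −ξ₂, −ξ₁ satisfying ξ₁² + ξ₂² = 8), setting β = Tr(ρB) and S₁₂ = 1 − Tr(ρ²), the inequality S₁₂ ≤ 1 − β²/8 holds; equivalently β² ≤ 8·Tr(ρ²). -/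
open Matrix
open scoped ComplexOrder

lemma exists_comp_perm_eq {n : ℕ} (f g : Fin n → ℝ)
    (h : (Finset.univ.val.map f) = (Finset.univ.val.map g)) :
    ∃ e : Equiv.Perm (Fin n), f ∘ e = g := by
  have hperm : (List.ofFn f).Perm (List.ofFn g) := by
    rw [← Multiset.coe_eq_coe, ← Fin.univ_val_map, ← Fin.univ_val_map]
    exact h
  have hf := Tuple.monotone_sort f
  have hg := Tuple.monotone_sort g
  have hkey : f ∘ Tuple.sort f = g ∘ Tuple.sort g := by
    apply List.ofFn_injective
    apply List.Perm.eq_of_sortedLE hf.sortedLE_ofFn hg.sortedLE_ofFn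
    exact ((Tuple.sort f).ofFn_comp_perm f).trans
      (hperm.trans ((Tuple.sort g).ofFn_comp_perm g).symm)
  refine ⟨(Tuple.sort g).symm.trans (Tuple.sort f), ?_⟩
  funext i
  have := congrFun hkey ((Tuple.sort g).symm i)
  simpa using this

/-- For a density matrix `ρ` and a Bell operator `B` (Hermitian with spectrum
`{ξ₁, ξ₂, −ξ₂, −ξ₁}`, `ξ₁² + ξ₂² = 8`) one has `S₁₂ ≤ 1 − β²/8`. -/
theorem linear_entropy_beta_bound' (ρ B : Matrix (Fin 4) (Fin 4) ℂ)
    (hρ : ρ.PosSemidef) (hρtr : ρ.trace = 1)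
    (hB : B.IsHermitian)
    (ξ₁ ξ₂ : ℝ) (hξ : ξ₁ ^ 2 + ξ₂ ^ 2 = 8)
    (hspec : (Finset.univ.val.map hB.eigenvalues) = ({ξ₁, ξ₂, -ξ₂, -ξ₁} : Multiset ℝ)) :
    1 - ((ρ * ρ).trace).re ≤ 1 - ((ρ * B).trace).re ^ 2 / 8 := by
  set U : Matrix (Fin 4) (Fin 4) ℂ := (hB.eigenvectorUnitary : Matrix (Fin 4) (Fin 4) ℂ) with hUdef
  have hUU : Uᴴ * U = 1 := by
    rw [← Matrix.star_eq_conjTranspose]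
    exact Matrix.mem_unitaryGroup_iff'.mp hB.eigenvectorUnitary.2
  have hUU' : U * Uᴴ = 1 := by
    rw [← Matrix.star_eq_conjTranspose]
    exact Matrix.mem_unitaryGroup_iff.mp hB.eigenvectorUnitary.2
  set σ := Uᴴ * ρ * U with hσdef
  have hσ : σ.PosSemidef := hρ.conjTranspose_mul_mul_same U
  set d : Fin 4 → ℝ := fun i => (σ i i).re with hddef
  set ev : Fin 4 → ℝ := hB.eigenvalues with hevdef
  -- diagonal entries are nonneg reals
  have hdiag : ∀ i, 0 ≤ σ i i := by
    intro i
    exact hσ.diag_nonneg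
  have hd : ∀ i, 0 ≤ d i := fun i => (Complex.le_def.mp (hdiag i)).1
  have hdim : ∀ i, (σ i i).im = 0 := fun i => ((Complex.le_def.mp (hdiag i)).2).symm
  -- trace of ρB
  have hβ : ((ρ * B).trace).re = ∑ i, ev i * d i := by
    have hBd := hB.spectral_theorem
    rw [Unitary.conjStarAlgAut_apply, Matrix.star_eq_conjTranspose] at hBd
    have h1 : ρ * B = (ρ * U * diagonal (RCLike.ofReal ∘ ev)) * Uᴴ := by
      rw [hBd, ← hUdef, ← hevdef]; simp only [Matrix.mul_assoc]
    have h2 : ((ρ * B).trace) = (σ * diagonal (RCLike.ofReal ∘ ev)).trace := by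
      rw [h1, Matrix.trace_mul_comm (ρ * U * diagonal (RCLike.ofReal ∘ ev)) Uᴴ, hσdef]
      simp only [Matrix.mul_assoc]
    rw [h2, Matrix.trace]
    simp only [Matrix.diag, Matrix.mul_diagonal, Complex.re_sum]
    refine Finset.sum_congr rfl fun i _ => ?_
    simp [Complex.mul_re, Complex.ofReal_re, Complex.ofReal_im, mul_comm, RCLike.ofReal, hddef]
  -- trace of ρ²
  have hσσ : ((ρ * ρ).trace) = (σ * σ).trace := by
    have : σ * σ = Uᴴ * (ρ * ρ) * U := by
      rw [hσdef]
      calc Uᴴ * ρ * U * (Uᴴ * ρ * U) = Uᴴ * ρ * (U * Uᴴ) * ρ * U := by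
            simp only [Matrix.mul_assoc]
        _ = Uᴴ * (ρ * ρ) * U := by rw [hUU']; simp only [Matrix.mul_one, Matrix.mul_assoc]
    have h3 : (σ * σ).trace = (ρ * ρ).trace := by
      rw [this, Matrix.trace_mul_comm (Uᴴ * (ρ * ρ)) U, ← Matrix.mul_assoc, hUU',
        Matrix.one_mul]
    exact h3.symm
  have htr2 : ((ρ * ρ).trace).re = ∑ i, ∑ j, Complex.normSq (σ i j) := by
    rw [hσσ, Matrix.trace]
    simp only [Matrix.diag, Matrix.mul_apply, Complex.re_sum]
    refine Finset.sum_congr rfl fun i _ => ?_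
    refine Finset.sum_congr rfl fun j _ => ?_
    have hji : σ j i = starRingEnd ℂ (σ i j) := by
      rw [← hσ.1.apply i j]; simp
    rw [hji, Complex.mul_conj, Complex.ofReal_re]
  have hsum : ∑ i, d i ^ 2 ≤ ((ρ * ρ).trace).re := by
    rw [htr2]
    refine Finset.sum_le_sum fun i _ => ?_
    have h1 : d i ^ 2 = Complex.normSq (σ i i) := by
      rw [Complex.normSq_apply, hdim i]; ring
    rw [h1]
    exact Finset.single_le_sum (fun j _ => Complex.normSq_nonneg _) (Finset.mem_univ i)
  -- permutation
  have hspec' : (Finset.univ.val.map ev) = (Finset.univ.val.map ![ξ₁, ξ₂, -ξ₂, -ξ₁]) := by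
    rw [hspec, Fin.univ_val_map]
    rfl
  obtain ⟨e, he⟩ := exists_comp_perm_eq ev ![ξ₁, ξ₂, -ξ₂, -ξ₁] hspec'
  have hβ2 : ((ρ * B).trace).re
      = ξ₁ * d (e 0) + ξ₂ * d (e 1) + (-ξ₂) * d (e 2) + (-ξ₁) * d (e 3) := by
    rw [hβ, ← Equiv.sum_comp e (fun i => ev i * d i)]
    have : ∀ i, ev (e i) = ![ξ₁, ξ₂, -ξ₂, -ξ₁] i := fun i => congrFun he i
    rw [Fin.sum_univ_four]
    rw [this 0, this 1, this 2, this 3]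
    simp [Matrix.cons_val_zero, Matrix.cons_val_one]
  have hd2 : ∑ i, d i ^ 2 = d (e 0) ^ 2 + d (e 1) ^ 2 + d (e 2) ^ 2 + d (e 3) ^ 2 := by
    rw [← Equiv.sum_comp e (fun i => d i ^ 2), Fin.sum_univ_four]
  -- the numeric inequality
  have key : ((ρ * B).trace).re ^ 2 ≤ 8 * ∑ i, d i ^ 2 := by
    rw [hβ2, hd2]
    have h0 := hd (e 0); have h1 := hd (e 1); have h2 := hd (e 2); have h3 := hd (e 3)
    nlinarith [sq_nonneg (ξ₁ * (d (e 1) - d (e 2)) - ξ₂ * (d (e 0) - d (e 3))),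
      mul_nonneg h0 h3, mul_nonneg h1 h2, sq_nonneg (d (e 0) - d (e 3)), sq_nonneg (d (e 1) - d (e 2))]
  have : ((ρ * B).trace).re ^ 2 / 8 ≤ ((ρ * ρ).trace).re := by
    have := key.trans (by linarith : 8 * ∑ i, d i ^ 2 ≤ 8 * ((ρ * ρ).trace).re)
    linarith
  linarith
end

section
/- For any 4×4 density matrix ρ on ℂ²⊗ℂ² and any Bell operator B, with β = Tr(ρB), S₁₂ = 1 − Tr(ρ²), S_j = 1 − Tr(ρ_j²) for the reduced density matrices ρ₁ = Tr₂ρ, ρ₂ = Tr₁ρ, the sum of conditional linear entropies satisfies (S₁₂ − S₁) + (S₁₂ − S₂) ≤ 1/2 − β²/8. -/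
open Matrix Kronecker
open scoped ComplexOrder

/-- Partial trace over the second qubit. -/
noncomputable def ptrace2 (ρ : Matrix (Fin 2 × Fin 2) (Fin 2 × Fin 2) ℂ) :
    Matrix (Fin 2) (Fin 2) ℂ :=
  Matrix.of fun i j => ∑ k, ρ (i, k) (j, k)

/-- Partial trace over the first qubit. -/
noncomputable def ptrace1 (ρ : Matrix (Fin 2 × Fin 2) (Fin 2 × Fin 2) ℂ) :
    Matrix (Fin 2) (Fin 2) ℂ :=
  Matrix.of fun i j => ∑ k, ρ (k, i) (k, j)

lemma herm_cs {n : Type*} [Fintype n] (M N : Matrix n n ℂ)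
    (hM : M.IsHermitian) (hN : N.IsHermitian) :
    ((M * N).trace.re) ^ 2 ≤ (M * M).trace.re * (N * N).trace.re := by
  have key : ∀ (A B : Matrix n n ℂ), B.IsHermitian →
      (A * B).trace.re = ∑ p : n × n, (A p.1 p.2 * star (B p.1 p.2)).re := by
    intro A B hB
    rw [Matrix.trace]
    simp only [Matrix.diag_apply, Matrix.mul_apply, Complex.re_sum]
    rw [← Finset.sum_product']
    refine Finset.sum_congr rfl fun p _ => ?_
    rw [hB.apply]
  have habs : ∀ (A : Matrix n n ℂ), A.IsHermitian →
      (A * A).trace.re = ∑ p : n × n, ‖A p.1 p.2‖ ^ 2 := by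
    intro A hA
    rw [key A A hA]
    refine Finset.sum_congr rfl fun p _ => ?_
    rw [Complex.star_def, Complex.mul_conj, ← Complex.sq_norm, Complex.ofReal_re]
  rw [key M N hN, habs M hM, habs N hN]
  calc (∑ p : n × n, (M p.1 p.2 * star (N p.1 p.2)).re) ^ 2
      ≤ (∑ p : n × n, ‖M p.1 p.2‖ * ‖N p.1 p.2‖) ^ 2 := by
        apply sq_le_sq'
        · rw [← Finset.sum_neg_distrib]
          refine Finset.sum_le_sum fun p _ => ?_
          calc -(‖M p.1 p.2‖ * ‖N p.1 p.2‖)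
              = -‖M p.1 p.2 * star (N p.1 p.2)‖ := by
                rw [norm_mul, Complex.star_def, Complex.norm_conj]
            _ ≤ (M p.1 p.2 * star (N p.1 p.2)).re := (abs_le.1 (Complex.abs_re_le_norm _)).1
        · refine Finset.sum_le_sum fun p _ => ?_
          calc (M p.1 p.2 * star (N p.1 p.2)).re
              ≤ ‖M p.1 p.2 * star (N p.1 p.2)‖ := Complex.re_le_norm _
            _ = ‖M p.1 p.2‖ * ‖N p.1 p.2‖ := by
                rw [norm_mul, Complex.star_def, Complex.norm_conj]
    _ ≤ (∑ p : n × n, ‖M p.1 p.2‖ ^ 2) *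
        ∑ p : n × n, ‖N p.1 p.2‖ ^ 2 :=
        Finset.sum_mul_sq_le_sq_mul_sq _ _ _

lemma tr_kron2 (ρ : Matrix (Fin 2 × Fin 2) (Fin 2 × Fin 2) ℂ) (X : Matrix (Fin 2) (Fin 2) ℂ) :
    (ρ * (X ⊗ₖ (1 : Matrix (Fin 2) (Fin 2) ℂ))).trace = (ptrace2 ρ * X).trace := by
  rw [Matrix.trace, Matrix.trace]
  simp only [Matrix.diag_apply, Matrix.mul_apply, ptrace2, Matrix.of_apply,
    Matrix.kroneckerMap_apply, Matrix.one_apply, Fintype.sum_prod_type, mul_ite, mul_one,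
    mul_zero, Finset.sum_ite_eq', Finset.mem_univ, if_true, Finset.sum_mul]
  exact Finset.sum_congr rfl fun i _ => Finset.sum_comm

lemma tr_kron1 (ρ : Matrix (Fin 2 × Fin 2) (Fin 2 × Fin 2) ℂ) (X : Matrix (Fin 2) (Fin 2) ℂ) :
    (ρ * ((1 : Matrix (Fin 2) (Fin 2) ℂ) ⊗ₖ X)).trace = (ptrace1 ρ * X).trace := by
  rw [Matrix.trace, Matrix.trace]
  simp only [Matrix.diag_apply, Matrix.mul_apply, ptrace1, Matrix.of_apply,
    Matrix.kroneckerMap_apply, Matrix.one_apply, Fintype.sum_prod_type, mul_ite, mul_one,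
    mul_zero, ite_mul, zero_mul, one_mul, Finset.sum_mul, Fin.sum_univ_two,
    Fin.isValue]
  norm_num
  ring

lemma tr_ptrace2 (ρ : Matrix (Fin 2 × Fin 2) (Fin 2 × Fin 2) ℂ) :
    (ptrace2 ρ).trace = ρ.trace := by
  rw [Matrix.trace, Matrix.trace]
  simp [ptrace2, Fintype.sum_prod_type]

lemma tr_ptrace1 (ρ : Matrix (Fin 2 × Fin 2) (Fin 2 × Fin 2) ℂ) :
    (ptrace1 ρ).trace = ρ.trace := by
  rw [Matrix.trace, Matrix.trace]
  simp [ptrace1, Fintype.sum_prod_type, Fin.sum_univ_two]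
  ring

lemma herm_ptrace2 {ρ : Matrix (Fin 2 × Fin 2) (Fin 2 × Fin 2) ℂ} (h : ρ.IsHermitian) :
    (ptrace2 ρ).IsHermitian := by
  ext i j
  simp only [conjTranspose_apply, ptrace2, Matrix.of_apply, star_sum]
  exact Finset.sum_congr rfl fun k _ => h.apply (i, k) (j, k)

lemma herm_ptrace1 {ρ : Matrix (Fin 2 × Fin 2) (Fin 2 × Fin 2) ℂ} (h : ρ.IsHermitian) :
    (ptrace1 ρ).IsHermitian := by
  ext i j
  simp only [conjTranspose_apply, ptrace1, Matrix.of_apply, star_sum]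
  exact Finset.sum_congr rfl fun k _ => h.apply (k, i) (k, j)

lemma kron_herm {A B : Matrix (Fin 2) (Fin 2) ℂ} (hA : A.IsHermitian) (hB : B.IsHermitian) :
    (A ⊗ₖ B).IsHermitian := by
  ext ⟨i, k⟩ ⟨j, l⟩
  simp only [conjTranspose_apply, kroneckerMap_apply, star_mul', hA.apply, hB.apply]

lemma herm_smul_num {n : Type*} [Fintype n] (c : ℂ) (hc : star c = c) {A : Matrix n n ℂ}
    (hA : A.IsHermitian) : (c • A).IsHermitian := by
  ext i j
  simp only [conjTranspose_apply, Matrix.smul_apply, smul_eq_mul, star_mul', hc, hA.apply]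

/-- The sum of conditional linear entropies satisfies
`S_{2/1} + S_{1/2} ≤ 1/2 − β²/8` for any state and any Bell operator. -/
theorem conditional_linear_entropy_bound
    (a₁ b₁ a₂ b₂ : Matrix (Fin 2) (Fin 2) ℂ)
    (ha₁ : a₁.IsHermitian) (hb₁ : b₁.IsHermitian)
    (ha₂ : a₂.IsHermitian) (hb₂ : b₂.IsHermitian)
    (ha₁sq : a₁ * a₁ = 1) (hb₁sq : b₁ * b₁ = 1)
    (ha₂sq : a₂ * a₂ = 1) (hb₂sq : b₂ * b₂ = 1)
    (ha₁tr : a₁.trace = 0) (hb₁tr : b₁.trace = 0)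
    (ha₂tr : a₂.trace = 0) (hb₂tr : b₂.trace = 0)
    (ρ : Matrix (Fin 2 × Fin 2) (Fin 2 × Fin 2) ℂ)
    (hρ : ρ.PosSemidef) (hρtr : ρ.trace = 1) :
    let B := a₁ ⊗ₖ a₂ + a₁ ⊗ₖ b₂ + b₁ ⊗ₖ a₂ - b₁ ⊗ₖ b₂
    let S₁₂ := 1 - ((ρ * ρ).trace).re
    let S₁ := 1 - ((ptrace2 ρ * ptrace2 ρ).trace).re
    let S₂ := 1 - ((ptrace1 ρ * ptrace1 ρ).trace).re
    (S₁₂ - S₁) + (S₁₂ - S₂) ≤ 1 / 2 - ((ρ * B).trace).re ^ 2 / 8 := by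
  intro B S₁₂ S₁ S₂
  set ρ₁ := ptrace2 ρ with hρ₁def
  set ρ₂ := ptrace1 ρ with hρ₂def
  have hρh : ρ.IsHermitian := hρ.1
  have htr1 : ρ₁.trace = 1 := by rw [hρ₁def, tr_ptrace2, hρtr]
  have htr2 : ρ₂.trace = 1 := by rw [hρ₂def, tr_ptrace1, hρtr]
  -- the 4×(shifted state)
  set M : Matrix (Fin 2 × Fin 2) (Fin 2 × Fin 2) ℂ :=
    (4 : ℂ) • ρ - ((2 : ℂ) • (ρ₁ ⊗ₖ (1 : Matrix (Fin 2) (Fin 2) ℂ)) +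
      (2 : ℂ) • ((1 : Matrix (Fin 2) (Fin 2) ℂ) ⊗ₖ ρ₂) -
      (1 : Matrix (Fin 2) (Fin 2) ℂ) ⊗ₖ (1 : Matrix (Fin 2) (Fin 2) ℂ)) with hMdef
  have hMherm : M.IsHermitian := by
    refine (herm_smul_num 4 (by norm_num) hρh).sub
      (((herm_smul_num 2 (by norm_num) (kron_herm (herm_ptrace2 hρh) Matrix.isHermitian_one)).add
        (herm_smul_num 2 (by norm_num) (kron_herm Matrix.isHermitian_one (herm_ptrace1 hρh)))).sub
        (kron_herm Matrix.isHermitian_one Matrix.isHermitian_one))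
  have hBherm : B.IsHermitian := by
    refine (((kron_herm ha₁ ha₂).add (kron_herm ha₁ hb₂)).add (kron_herm hb₁ ha₂)).sub
      (kron_herm hb₁ hb₂)
  set t₁ := (ρ₁ * ρ₁).trace with ht₁def
  set t₂ := (ρ₂ * ρ₂).trace with ht₂def
  have k1 : (ρ * (ρ₁ ⊗ₖ (1 : Matrix (Fin 2) (Fin 2) ℂ))).trace = t₁ := tr_kron2 ρ ρ₁
  have k2 : (ρ * ((1 : Matrix (Fin 2) (Fin 2) ℂ) ⊗ₖ ρ₂)).trace = t₂ := tr_kron1 ρ ρ₂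
  have hone : ((1 : Matrix (Fin 2) (Fin 2) ℂ) ⊗ₖ (1 : Matrix (Fin 2) (Fin 2) ℂ))
      = (1 : Matrix (Fin 2 × Fin 2) (Fin 2 × Fin 2) ℂ) := Matrix.one_kronecker_one
  have htrone2 : (1 : Matrix (Fin 2) (Fin 2) ℂ).trace = 2 := by
    simp [Matrix.trace_one]
  have htrone4 : (1 : Matrix (Fin 2 × Fin 2) (Fin 2 × Fin 2) ℂ).trace = 4 := by
    simp [Matrix.trace_one]
  -- trace of M*M
  have hMM : (M * M).trace = 16 * (ρ * ρ).trace - 8 * t₁ - 8 * t₂ + 4 := by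
    rw [hMdef]
    simp only [sub_mul, mul_sub, add_mul, mul_add, smul_mul_assoc, mul_smul_comm, smul_smul,
      Matrix.trace_sub, Matrix.trace_add, Matrix.trace_smul, ← Matrix.mul_kronecker_mul,
      one_mul, mul_one, smul_eq_mul]
    rw [Matrix.trace_mul_comm (ρ₁ ⊗ₖ (1 : Matrix (Fin 2) (Fin 2) ℂ)) ρ,
      Matrix.trace_mul_comm ((1 : Matrix (Fin 2) (Fin 2) ℂ) ⊗ₖ ρ₂) ρ,
      Matrix.trace_mul_comm ((1 : Matrix (Fin 2) (Fin 2) ℂ) ⊗ₖ (1 : Matrix (Fin 2) (Fin 2) ℂ)) ρ]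
    rw [k1, k2, hone, mul_one]
    simp only [Matrix.trace_kronecker, htrone2, hρtr, htr1, htr2, Matrix.trace_one,
      Fintype.card_prod, Fintype.card_fin]
    push_cast
    ring
  -- trace of M*B = 4 * trace of ρ*B
  have hMB : (M * B).trace = 4 * (ρ * B).trace := by
    rw [hMdef]
    simp only [sub_mul, add_mul, smul_mul_assoc, Matrix.trace_sub, Matrix.trace_add,
      Matrix.trace_smul, smul_eq_mul]
    have hz : (((2 : ℂ) • (ρ₁ ⊗ₖ (1 : Matrix (Fin 2) (Fin 2) ℂ)) +
        (2 : ℂ) • ((1 : Matrix (Fin 2) (Fin 2) ℂ) ⊗ₖ ρ₂) -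
        (1 : Matrix (Fin 2) (Fin 2) ℂ) ⊗ₖ (1 : Matrix (Fin 2) (Fin 2) ℂ)) * B).trace = 0 := by
      simp only [B, sub_mul, add_mul, mul_sub, mul_add, smul_mul_assoc,
        Matrix.trace_sub, Matrix.trace_add, Matrix.trace_smul, ← Matrix.mul_kronecker_mul,
        one_mul, mul_one, Matrix.trace_kronecker, ha₁tr, hb₁tr, ha₂tr, hb₂tr,
        mul_zero, zero_mul, smul_eq_mul]
      ring
    simp only [B, sub_mul, add_mul, mul_sub, mul_add, smul_mul_assoc, Matrix.trace_sub,
      Matrix.trace_add, Matrix.trace_smul, ← Matrix.mul_kronecker_mul, one_mul, mul_one,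
      Matrix.trace_kronecker, ha₁tr, hb₁tr, ha₂tr, hb₂tr, mul_zero, zero_mul,
      smul_eq_mul] at hz ⊢
    linear_combination hz
  -- trace of B*B = 16
  have hBB : (B * B).trace = 16 := by
    simp only [B, sub_mul, add_mul, mul_sub, mul_add, Matrix.trace_sub, Matrix.trace_add,
      ← Matrix.mul_kronecker_mul, Matrix.trace_kronecker, ha₁sq, hb₁sq, ha₂sq, hb₂sq, htrone2]
    rw [Matrix.trace_mul_comm b₁ a₁, Matrix.trace_mul_comm b₂ a₂]
    ring
  -- Cauchy–Schwarz
  have hcs := herm_cs M B hMherm hBherm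
  rw [hMB, hMM, hBB] at hcs
  -- pass to real parts
  have h16 : ((16 : ℂ) : ℂ).re = 16 := by norm_num
  have hre1 : ((4 : ℂ) * (ρ * B).trace).re = 4 * ((ρ * B).trace).re := by
    simp [Complex.mul_re]
  have hre2 : ((16 : ℂ) * (ρ * ρ).trace - 8 * t₁ - 8 * t₂ + 4).re
      = 16 * ((ρ * ρ).trace).re - 8 * t₁.re - 8 * t₂.re + 4 := by
    simp [Complex.sub_re, Complex.add_re, Complex.mul_re]
  rw [hre1, hre2, h16] at hcs
  -- conclude
  simp only [S₁₂, S₁, S₂, ← hρ₁def, ← hρ₂def, ← ht₁def, ← ht₂def]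
  nlinarith [hcs, sq_nonneg (((ρ * B).trace).re)]
end

section
/- For any density matrix ρ on ℂ²⊗ℂ² with reduced density matrices ρ₁, ρ₂, the matrix ρ' = ρ − (1/2)I₁⊗ρ₂ − (1/2)ρ₁⊗I₂ + (1/2)I₄ is Hermitian, has unit trace, and satisfies ⟨ψ|ρ'|ψ⟩ = ⟨ψ|ρ|ψ⟩ ≥ 0 for every Bell state ψ. -/
open Matrix Kronecker
open scoped ComplexOrder

/-- A Bell state `(|ij⟩ + s|kl⟩)/√2`. -/
noncomputable def bellVec (i j k l : Fin 2) (s : ℂ) : (Fin 2 × Fin 2) → ℂ :=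
  fun p => ((if p = (i, j) then 1 else 0) + s * (if p = (k, l) then 1 else 0)) /
    (Real.sqrt 2 : ℝ)

/-- The four Bell states. -/
noncomputable def bellStates : Set ((Fin 2 × Fin 2) → ℂ) :=
  {bellVec 0 0 1 1 1, bellVec 0 0 1 1 (-1), bellVec 0 1 1 0 1, bellVec 0 1 1 0 (-1)}

set_option maxHeartbeats 1000000 in
/-- The matrix `ρ' = ρ − ½ I₁⊗ρ₂ − ½ ρ₁⊗I₂ + ½ I₄` is Hermitian, has unit trace,
and has the same (nonnegative) Bell-state diagonal elements as `ρ`. -/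
theorem rho_prime_properties (ρ : Matrix (Fin 2 × Fin 2) (Fin 2 × Fin 2) ℂ)
    (hρ : ρ.PosSemidef) (hρtr : ρ.trace = 1) :
    let ρ' := ρ - (1 / 2 : ℂ) • ((1 : Matrix (Fin 2) (Fin 2) ℂ) ⊗ₖ ptrace1 ρ)
      - (1 / 2 : ℂ) • (ptrace2 ρ ⊗ₖ (1 : Matrix (Fin 2) (Fin 2) ℂ))
      + (1 / 2 : ℂ) • (1 : Matrix (Fin 2 × Fin 2) (Fin 2 × Fin 2) ℂ)
    ρ'.IsHermitian ∧ ρ'.trace = 1 ∧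
    ∀ ψ ∈ bellStates,
      star ψ ⬝ᵥ ρ'.mulVec ψ = star ψ ⬝ᵥ ρ.mulVec ψ ∧
      0 ≤ (star ψ ⬝ᵥ ρ.mulVec ψ).re := by
  intro ρ'
  have h2 : ((Real.sqrt 2 : ℝ) : ℂ) * ((Real.sqrt 2 : ℝ) : ℂ) = 2 := by
    norm_cast; rw [Real.mul_self_sqrt]; norm_num
  have hne : ((Real.sqrt 2 : ℝ) : ℂ) ≠ 0 := by
    intro h; rw [h] at h2; norm_num at h2
  have htr : ρ (0, 0) (0, 0) + ρ (0, 1) (0, 1) + ρ (1, 0) (1, 0) + ρ (1, 1) (1, 1) = 1 := by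
    have := hρtr
    simp [Matrix.trace, Fintype.sum_prod_type, Fin.sum_univ_two] at this
    linear_combination this
  have he : ∀ p q, star (ρ q p) = ρ p q := by
    intro p q
    conv_rhs => rw [← hρ.1]
    simp [conjTranspose_apply]
  refine ⟨?_, ?_, ?_⟩
  · show ρ'ᴴ = ρ'
    ext p q
    simp only [ρ', conjTranspose_apply, Matrix.sub_apply, Matrix.add_apply, Matrix.smul_apply, kroneckerMap_apply,
      ptrace1, ptrace2, Matrix.of_apply, one_apply, smul_eq_mul, star_add, star_sub, star_mul',
      star_sum, he, star_one, star_zero]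
    obtain ⟨i, a⟩ := p; obtain ⟨j, b⟩ := q
    simp [he, eq_comm, mul_comm]
  · show Matrix.trace ρ' = 1
    simp only [ρ']
    simp [Matrix.trace, Fintype.sum_prod_type, Fin.sum_univ_two, Matrix.sub_apply, Matrix.add_apply,
      Matrix.smul_apply, kroneckerMap_apply, ptrace1, ptrace2, Matrix.one_apply, smul_eq_mul]
    linear_combination -htr
  · rintro ψ (rfl | rfl | rfl | rfl) <;>
    refine ⟨?_, by simpa using (Complex.le_def.mp (hρ.dotProduct_mulVec_nonneg _)).1⟩ <;>
    · simp only [ρ']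
      simp [bellVec, dotProduct, mulVec, kroneckerMap_apply, ptrace1, ptrace2,
        Fintype.sum_prod_type, Fin.sum_univ_two, Matrix.one_apply, Prod.ext_iff,
        Matrix.sub_apply, Matrix.add_apply, Matrix.smul_apply, smul_eq_mul]
      field_simp
      ring_nf
      linear_combination (-2:ℂ) * htr
end

section
/- For any 4×4 density matrix ρ and any Bell operator B, setting β = Tr(ρB) and β' = β/(2√2), the von Neumann entropy satisfies S₁₂ = −Tr(ρ ln ρ) ≤ 2 ln 2 − (1+β') ln(1+β') − (1−β') ln(1−β'). In particular, if S₁₂ ≥ 3 ln 2 − √2 ln(√2+1) ≈ 0.833 then |β| ≤ 2. -/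
open Real
open scoped Nat

lemma real_exp_tsum (x : ℝ) : Real.exp x = ∑' n : ℕ, x ^ n / n ! := by
  rw [Real.exp_eq_exp_ℝ, NormedSpace.exp_eq_tsum_div]

/-- `cosh x + cosh y ≤ 1 + cosh √(x²+y²)`, in exp form. -/
lemma expsum_le (x y : ℝ) :
    Real.exp x + Real.exp (-x) + (Real.exp y + Real.exp (-y)) ≤
      2 + (Real.exp (Real.sqrt (x^2 + y^2)) + Real.exp (-Real.sqrt (x^2 + y^2))) := by
  set s := Real.sqrt (x^2+y^2) with hs
  have hs2 : s ^ 2 = x ^ 2 + y ^ 2 := Real.sq_sqrt (by positivity)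
  have key : ∀ z : ℝ, Real.exp z + Real.exp (-z) = ∑' n : ℕ, (z ^ n + (-z) ^ n) / n ! := by
    intro z
    rw [real_exp_tsum z, real_exp_tsum (-z),
      ← Summable.tsum_add (Real.summable_pow_div_factorial z) (Real.summable_pow_div_factorial (-z))]
    congr 1; ext n; ring
  have hsumz : ∀ z : ℝ, Summable (fun n : ℕ => (z ^ n + (-z) ^ n) / n !) := fun z => by
    have := (Real.summable_pow_div_factorial z).add (Real.summable_pow_div_factorial (-z))
    convert this using 2 with n; ring
  rw [key x, key y, key s]
  rw [Summable.tsum_eq_zero_add (hsumz x), Summable.tsum_eq_zero_add (hsumz y), Summable.tsum_eq_zero_add (hsumz s)]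
  have h0 : ∀ z : ℝ, (z ^ 0 + (-z) ^ 0) / (0: ℕ)! = 2 := by intro z; norm_num
  rw [h0, h0, h0]
  have hterm : ∀ n : ℕ, (x ^ (n+1) + (-x) ^ (n+1)) / (n+1)! + (y ^ (n+1) + (-y) ^ (n+1)) / (n+1)!
      ≤ (s ^ (n+1) + (-s) ^ (n+1)) / (n+1)! := by
    intro n
    rcases Nat.even_or_odd (n+1) with he | ho
    · obtain ⟨m, hm⟩ := he
      have hm0 : m ≠ 0 := by omega
      have hx : (-x) ^ (n+1) = x ^ (n+1) := Even.neg_pow ⟨m, hm⟩ x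
      have hy : (-y) ^ (n+1) = y ^ (n+1) := Even.neg_pow ⟨m, hm⟩ y
      have hss : (-s) ^ (n+1) = s ^ (n+1) := Even.neg_pow ⟨m, hm⟩ s
      rw [hx, hy, hss]
      have h2m : n + 1 = 2 * m := by omega
      have hxp : x ^ (n+1) = (x^2) ^ m := by rw [h2m, pow_mul]
      have hyp : y ^ (n+1) = (y^2) ^ m := by rw [h2m, pow_mul]
      have hsp : s ^ (n+1) = (s^2) ^ m := by rw [h2m, pow_mul]
      rw [hxp, hyp, hsp, hs2]
      have hple := pow_add_pow_le (sq_nonneg x) (sq_nonneg y) hm0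
      have : (0:ℝ) < (n+1)! := by positivity
      have h2 : ((x^2)^m + (y^2)^m) / (n+1)! ≤ ((x^2+y^2)^m) / (n+1)! := by gcongr
      calc ((x^2)^m + (x^2)^m) / ((n+1)! : ℝ) + ((y^2)^m + (y^2)^m)/((n+1)! : ℝ)
          = 2 * (((x^2)^m + (y^2)^m) / (n+1)!) := by ring
        _ ≤ 2 * (((x^2+y^2)^m) / (n+1)!) := by linarith
        _ = ((x^2+y^2)^m + (x^2+y^2)^m) / ((n+1)! : ℝ) := by ring
    · have hx : (-x) ^ (n+1) = -x ^ (n+1) := Odd.neg_pow ho x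
      have hy : (-y) ^ (n+1) = -y ^ (n+1) := Odd.neg_pow ho y
      have hss : (-s) ^ (n+1) = -s ^ (n+1) := Odd.neg_pow ho s
      rw [hx, hy, hss]; simp
  have hsx := (summable_nat_add_iff 1).2 (hsumz x)
  have hsy := (summable_nat_add_iff 1).2 (hsumz y)
  have hss := (summable_nat_add_iff 1).2 (hsumz s)
  have := Summable.tsum_le_tsum hterm (hsx.add hsy) hss
  rw [Summable.tsum_add hsx hsy] at this
  linarith

open Real

/-- Gibbs variational inequality: `-∑ p log p + ∑ p c ≤ log ∑ exp c`. -/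
lemma gibbs_ineq {n : Type*} [Fintype n] [Nonempty n] (p c : n → ℝ)
    (hp : ∀ i, 0 ≤ p i) (hps : ∑ i, p i = 1) :
    -∑ i, p i * Real.log (p i) + ∑ i, p i * c i ≤ Real.log (∑ i, Real.exp (c i)) := by
  set Z := ∑ i, Real.exp (c i) with hZ
  have hZpos : 0 < Z := Finset.sum_pos (fun i _ => Real.exp_pos _) Finset.univ_nonempty
  have perI : ∀ i, p i * c i - p i * Real.log (p i) - p i * Real.log Z
      ≤ Real.exp (c i) / Z - p i := by
    intro i
    rcases eq_or_lt_of_le (hp i) with h0 | hpos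
    · rw [← h0]; simp; positivity
    · have hxpos : 0 < Real.exp (c i) / (p i * Z) := by positivity
      have hlog := Real.log_le_sub_one_of_pos hxpos
      rw [Real.log_div (by positivity) (by positivity), Real.log_exp,
        Real.log_mul (ne_of_gt hpos) (ne_of_gt hZpos)] at hlog
      have := mul_le_mul_of_nonneg_left hlog (le_of_lt hpos)
      calc p i * c i - p i * Real.log (p i) - p i * Real.log Z
          = p i * (c i - (Real.log (p i) + Real.log Z)) := by ring
        _ ≤ p i * (Real.exp (c i) / (p i * Z) - 1) := this
        _ = Real.exp (c i) / Z - p i := by field_simp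
  have hsum := Finset.sum_le_sum (fun i (_ : i ∈ Finset.univ) => perI i)
  rw [Finset.sum_sub_distrib, Finset.sum_sub_distrib, Finset.sum_sub_distrib,
    ← Finset.sum_mul, hps, one_mul, ← Finset.sum_div, ← hZ, div_self (ne_of_gt hZpos)] at hsum
  linarith

open Real

lemma two_binEntropy_eq (x : ℝ) (hx1 : -1 ≤ x) (hx2 : x ≤ 1) :
    2 * Real.binEntropy ((1+x)/2)
      = 2*Real.log 2 - (1+x)*Real.log (1+x) - (1-x)*Real.log (1-x) := by
  rcases eq_or_lt_of_le hx2 with h1 | h1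
  · subst h1; norm_num
  rcases eq_or_lt_of_le hx1 with h2 | h2
  · rw [show x = -1 by linarith]; norm_num
  have ha : (0:ℝ) < 1 + x := by linarith
  have hb : (0:ℝ) < 1 - x := by linarith
  rw [Real.binEntropy]
  have e1 : (1 : ℝ) - (1+x)/2 = (1-x)/2 := by ring
  rw [e1, Real.log_inv, Real.log_inv,
    Real.log_div (ne_of_gt ha) (by norm_num), Real.log_div (ne_of_gt hb) (by norm_num)]
  ring

lemma const_eq : 2 * Real.binEntropy ((1 + (Real.sqrt 2)⁻¹)/2)
    = 3*Real.log 2 - Real.sqrt 2 * Real.log (Real.sqrt 2 + 1) := by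
  set r := Real.sqrt 2 with hrdef
  have hr : r ^ 2 = 2 := Real.sq_sqrt (by norm_num)
  have hrpos : 0 < r := Real.sqrt_pos.2 (by norm_num)
  have hr1 : 1 < r := by nlinarith
  have hinv : r⁻¹ = r / 2 := by
    rw [eq_div_iff (by norm_num), inv_mul_eq_div, div_eq_iff (ne_of_gt hrpos)]; nlinarith
  have hinvlt : r⁻¹ < 1 := by rw [hinv]; nlinarith
  have h0inv : (0:ℝ) ≤ r⁻¹ := by positivity
  rw [two_binEntropy_eq _ (by linarith) (le_of_lt hinvlt)]
  have e1 : 1 + r⁻¹ = (r+1)/r := by field_simp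
  have e2 : 1 - r⁻¹ = (r-1)/r := by field_simp
  have hlogr : Real.log r = Real.log 2 / 2 := Real.log_sqrt (by norm_num)
  have hrm : r - 1 = (r+1)⁻¹ := by
    apply eq_inv_of_mul_eq_one_left; nlinarith
  rw [e1, e2, Real.log_div (by positivity) (ne_of_gt hrpos),
    Real.log_div (by nlinarith) (ne_of_gt hrpos), hrm, Real.log_inv, hlogr]
  field_simp
  ring_nf

  linear_combination (2 * r * Real.log (1+r) - Real.log 2) * hr

set_option maxHeartbeats 1000000
open Matrix

lemma conj_trace_eq {n : Type*} [Fintype n] [DecidableEq n]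
    (A A' U V : Matrix n n ℂ) (dp db : n → ℂ)
    (hU1 : U * star U = 1) (hU2 : star U * U = 1)
    (hV1 : V * star V = 1)
    (hA : A = U * diagonal dp * star U) (hA' : A' = V * diagonal db * star V) :
    (A * A').trace = ∑ i, ∑ j, dp i * db j * ((star U * V) i j * star ((star U * V) i j)) := by
  subst hA hA'
  have hsw : star (star U * V) = star V * U := by simp
  have e1 : U * diagonal dp * star U * (V * diagonal db * star V)
      = U * (diagonal dp * (star U * V) * diagonal db * star (star U * V)) * star U := by
    rw [hsw]
    simp only [Matrix.mul_assoc]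
    rw [hU1]
    simp only [Matrix.mul_one]
  rw [e1, Matrix.trace_mul_cycle, hU2, Matrix.one_mul, Matrix.trace]
  apply Finset.sum_congr rfl; intro i _
  rw [Matrix.diag_apply, Matrix.mul_apply]
  apply Finset.sum_congr rfl; intro j _
  rw [Matrix.mul_diagonal, Matrix.diagonal_mul, Matrix.star_apply]
  ring

lemma row_sums {n : Type*} [Fintype n] [DecidableEq n] (W : Matrix n n ℂ)
    (hWW : W * star W = 1) (i : n) : ∑ j, Complex.normSq (W i j) = 1 := by
  have h1 : (W * star W) i i = 1 := by rw [hWW]; simp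
  rw [Matrix.mul_apply] at h1
  simp only [Matrix.star_apply, Complex.star_def, Complex.mul_conj] at h1
  exact_mod_cast h1

lemma trace_decomp {n : Type*} [Fintype n] [DecidableEq n]
    (ρ B : Matrix n n ℂ) (hρ : ρ.IsHermitian) (hB : B.IsHermitian) :
    ∃ D : n → n → ℝ, (∀ i j, 0 ≤ D i j) ∧ (∀ i, ∑ j, D i j = 1) ∧ (∀ j, ∑ i, D i j = 1) ∧
      (ρ * B).trace = ((∑ i, ∑ j, hρ.eigenvalues i * hB.eigenvalues j * D i j : ℝ) : ℂ) := by
  have hU1 := mem_unitaryGroup_iff.mp (Matrix.IsHermitian.eigenvectorUnitary hρ).2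
  have hU2 := mem_unitaryGroup_iff'.mp (Matrix.IsHermitian.eigenvectorUnitary hρ).2
  have hV1 := mem_unitaryGroup_iff.mp (Matrix.IsHermitian.eigenvectorUnitary hB).2
  have hV2 := mem_unitaryGroup_iff'.mp (Matrix.IsHermitian.eigenvectorUnitary hB).2
  set W : Matrix n n ℂ :=
    star (Matrix.IsHermitian.eigenvectorUnitary hρ : Matrix n n ℂ)
      * (Matrix.IsHermitian.eigenvectorUnitary hB : Matrix n n ℂ) with hWdef
  have hWW1 : W * star W = 1 := by
    rw [hWdef]
    have hsw : star (star (Matrix.IsHermitian.eigenvectorUnitary hρ : Matrix n n ℂ)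
        * (Matrix.IsHermitian.eigenvectorUnitary hB : Matrix n n ℂ))
        = star (Matrix.IsHermitian.eigenvectorUnitary hB : Matrix n n ℂ)
          * (Matrix.IsHermitian.eigenvectorUnitary hρ : Matrix n n ℂ) := by simp
    rw [hsw]
    simp only [Matrix.mul_assoc]
    rw [← Matrix.mul_assoc (Matrix.IsHermitian.eigenvectorUnitary hB : Matrix n n ℂ), hV1,
      Matrix.one_mul, hU2]
  have hWW2 : star W * W = 1 := by
    rw [hWdef]
    have hsw : star (star (Matrix.IsHermitian.eigenvectorUnitary hρ : Matrix n n ℂ)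
        * (Matrix.IsHermitian.eigenvectorUnitary hB : Matrix n n ℂ))
        = star (Matrix.IsHermitian.eigenvectorUnitary hB : Matrix n n ℂ)
          * (Matrix.IsHermitian.eigenvectorUnitary hρ : Matrix n n ℂ) := by simp
    rw [hsw]
    simp only [Matrix.mul_assoc]
    rw [← Matrix.mul_assoc (Matrix.IsHermitian.eigenvectorUnitary hρ : Matrix n n ℂ), hU1,
      Matrix.one_mul, hV2]
  refine ⟨fun i j => Complex.normSq (W i j), fun i j => Complex.normSq_nonneg _,
    fun i => row_sums W hWW1 i, ?_, ?_⟩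
  · intro j
    have h1 : (star W * W) j j = 1 := by rw [hWW2]; simp
    rw [Matrix.mul_apply] at h1
    simp only [Matrix.star_apply, Complex.star_def] at h1
    have e : ∀ i, (starRingEnd ℂ) (W i j) * W i j = ((Complex.normSq (W i j) : ℝ) : ℂ) := by
      intro i; rw [mul_comm, Complex.mul_conj]
    rw [Finset.sum_congr rfl (fun i _ => e i)] at h1
    exact_mod_cast h1
  · have := conj_trace_eq ρ B _ _ _ _ hU1 hU2 hV1 hρ.spectral_theorem hB.spectral_theorem
    rw [this]
    push_cast
    apply Finset.sum_congr rfl; intro i _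
    apply Finset.sum_congr rfl; intro j _
    rw [← hWdef, Complex.star_def, Complex.mul_conj]
    have : ((RCLike.ofReal : ℝ → ℂ) ∘ hρ.eigenvalues) i = ((hρ.eigenvalues i : ℝ) : ℂ) := rfl
    rw [this]
    have : ((RCLike.ofReal : ℝ → ℂ) ∘ hB.eigenvalues) j = ((hB.eigenvalues j : ℝ) : ℂ) := rfl
    rw [this]

lemma trace_eq_sum_eig {n : Type*} [Fintype n] [DecidableEq n]
    (ρ : Matrix n n ℂ) (hρ : ρ.IsHermitian) :
    ρ.trace = ((∑ i, hρ.eigenvalues i : ℝ) : ℂ) := by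
  have hU2 : star (Matrix.IsHermitian.eigenvectorUnitary hρ : Matrix n n ℂ)
      * (Matrix.IsHermitian.eigenvectorUnitary hρ : Matrix n n ℂ) = 1 :=
    mem_unitaryGroup_iff'.mp (Matrix.IsHermitian.eigenvectorUnitary hρ).2
  conv_lhs => rw [hρ.spectral_theorem]
  rw [Unitary.conjStarAlgAut_apply]
  rw [Matrix.trace_mul_cycle, hU2, Matrix.one_mul, Matrix.trace_diagonal]
  push_cast
  rfl


open Matrix
open scoped ComplexOrder

/-- The von Neumann entropy `−Tr(ρ ln ρ)` of a Hermitian matrix,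
computed through its eigenvalues. -/
noncomputable def vnEntropy {n : Type*} [Fintype n] [DecidableEq n]
    {ρ : Matrix n n ℂ} (h : ρ.IsHermitian) : ℝ :=
  -∑ i, h.eigenvalues i * Real.log (h.eigenvalues i)

set_option maxHeartbeats 1000000 in
/-- For any density matrix and any Bell operator, the von Neumann entropy is bounded
by `2 ln 2 − (1+β') ln(1+β') − (1−β') ln(1−β')` with `β' = β/(2√2)`; in particular
`S₁₂ ≥ 3 ln 2 − √2 ln(√2+1)` forces `|β| ≤ 2`. -/
theorem vn_entropy_bell_bound (ρ B : Matrix (Fin 4) (Fin 4) ℂ)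
    (hρ : ρ.PosSemidef) (hρtr : ρ.trace = 1)
    (hB : B.IsHermitian) (ξ₁ ξ₂ : ℝ) (hξ : ξ₁ ^ 2 + ξ₂ ^ 2 = 8)
    (hspec : (Finset.univ.val.map hB.eigenvalues) = ({ξ₁, ξ₂, -ξ₂, -ξ₁} : Multiset ℝ)) :
    let β := ((ρ * B).trace).re
    let β' := β / (2 * Real.sqrt 2)
    vnEntropy hρ.1 ≤
      2 * Real.log 2 - (1 + β') * Real.log (1 + β') - (1 - β') * Real.log (1 - β') ∧
    (3 * Real.log 2 - Real.sqrt 2 * Real.log (Real.sqrt 2 + 1) ≤ vnEntropy hρ.1 →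
      |β| ≤ 2) := by
  intro β β'
  have hβ'def : β' = β / (2 * Real.sqrt 2) := rfl
  obtain ⟨D, hD0, hrow, hcol, htr⟩ := trace_decomp ρ B hρ.1 hB
  set p := (hρ.1).eigenvalues with hpdef
  set b := hB.eigenvalues with hbdef
  have hp0 : ∀ i, 0 ≤ p i := fun i => hρ.eigenvalues_nonneg i
  have hps : ∑ i, p i = 1 := by
    have h1 := trace_eq_sum_eig ρ hρ.1
    rw [hρtr] at h1
    exact_mod_cast h1.symm
  have hβ : β = ∑ i, ∑ j, p i * b j * D i j := by
    show ((ρ * B).trace).re = _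
    rw [htr, Complex.ofReal_re]
  have hs2 : Real.sqrt 2 ^ 2 = 2 := Real.sq_sqrt (by norm_num)
  have hs2pos : (0:ℝ) < Real.sqrt 2 := Real.sqrt_pos.2 (by norm_num)
  have h22pos : (0:ℝ) < 2 * Real.sqrt 2 := by positivity
  have hbmem : ∀ j, b j = ξ₁ ∨ b j = ξ₂ ∨ b j = -ξ₂ ∨ b j = -ξ₁ := by
    intro j
    have h1 : b j ∈ Finset.univ.val.map hB.eigenvalues :=
      Multiset.mem_map_of_mem _ (Finset.mem_univ j)
    rw [hspec] at h1
    simpa using h1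
  have hbabs : ∀ j, |b j| ≤ 2 * Real.sqrt 2 := by
    intro j
    have h1 : (b j)^2 ≤ 8 := by
      rcases hbmem j with h|h|h|h <;> rw [h] <;> nlinarith [sq_nonneg ξ₁, sq_nonneg ξ₂]
    nlinarith [sq_abs (b j), abs_nonneg (b j)]
  -- the central Gibbs-type bound, for every real `t`
  have main : ∀ t : ℝ, vnEntropy hρ.1 + t * β ≤
      Real.log (2 + (Real.exp (2*Real.sqrt 2*t) + Real.exp (-(2*Real.sqrt 2*t)))) := by
    intro t
    have hgibbs := gibbs_ineq p (fun i => t * ∑ j, D i j * b j) hp0 hps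
    have e0 : vnEntropy hρ.1 = -∑ i, p i * Real.log (p i) := rfl
    have e1 : t * β = ∑ i, p i * (t * ∑ j, D i j * b j) := by
      rw [hβ, Finset.mul_sum]
      apply Finset.sum_congr rfl; intro i _
      rw [Finset.mul_sum, Finset.mul_sum, Finset.mul_sum]
      apply Finset.sum_congr rfl; intro j _; ring
    have hexp : ∀ i, Real.exp (t * ∑ j, D i j * b j) ≤ ∑ j, D i j * Real.exp (t * b j) := by
      intro i
      have hc := convexOn_exp.map_sum_le (t := Finset.univ) (w := fun j => D i j)
        (p := fun j => t * b j) (fun j _ => hD0 i j) (hrow i) (fun j _ => Set.mem_univ _)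
      simp only [smul_eq_mul] at hc
      have e2 : ∑ j, D i j * (t * b j) = t * ∑ j, D i j * b j := by
        rw [Finset.mul_sum]; apply Finset.sum_congr rfl; intro j _; ring
      rwa [e2] at hc
    have h2 : ∑ i, Real.exp (t * ∑ j, D i j * b j) ≤ ∑ j, Real.exp (t * b j) := by
      calc ∑ i, Real.exp (t * ∑ j, D i j * b j) ≤ ∑ i, ∑ j, D i j * Real.exp (t * b j) :=
            Finset.sum_le_sum (fun i _ => hexp i)
        _ = ∑ j, (∑ i, D i j) * Real.exp (t * b j) := by
            rw [Finset.sum_comm]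
            apply Finset.sum_congr rfl; intro j _
            rw [Finset.sum_mul]
        _ = ∑ j, Real.exp (t * b j) := by
            apply Finset.sum_congr rfl; intro j _
            rw [hcol j, one_mul]
    have h3 : ∑ j, Real.exp (t * b j)
        = Real.exp (t*ξ₁) + Real.exp (-(t*ξ₁)) + (Real.exp (t*ξ₂) + Real.exp (-(t*ξ₂))) := by
      have e3 : ∑ j, Real.exp (t * b j)
          = ((Finset.univ.val.map b).map (fun x => Real.exp (t * x))).sum := by
        rw [Multiset.map_map]; rfl
      rw [e3, ← hbdef] at *
      rw [show Finset.univ.val.map b = ({ξ₁, ξ₂, -ξ₂, -ξ₁} : Multiset ℝ) from hspec]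
      simp [mul_neg]
      ring
    have h5 : Real.sqrt ((t*ξ₁)^2 + (t*ξ₂)^2) = 2*Real.sqrt 2 * |t| := by
      rw [show (t*ξ₁)^2 + (t*ξ₂)^2 = (2*Real.sqrt 2 * |t|)^2 by
        linear_combination t^2*hξ + (-4*t^2)*hs2 + (-4*Real.sqrt 2^2)*(sq_abs t)]
      exact Real.sqrt_sq (by positivity)
    have h4 := expsum_le (t*ξ₁) (t*ξ₂)
    rw [h5] at h4
    have h6 : Real.exp (2*Real.sqrt 2*|t|) + Real.exp (-(2*Real.sqrt 2*|t|))
        = Real.exp (2*Real.sqrt 2*t) + Real.exp (-(2*Real.sqrt 2*t)) := by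
      rcases abs_cases t with ⟨ht1, _⟩ | ⟨ht1, _⟩
      · rw [ht1]
      · rw [ht1, mul_neg, neg_neg, add_comm]
    rw [h6] at h4
    have hZpos : (0:ℝ) < ∑ i, Real.exp (t * ∑ j, D i j * b j) :=
      Finset.sum_pos (fun i _ => Real.exp_pos _) ⟨0, Finset.mem_univ 0⟩
    have hlog1 : Real.log (∑ i, Real.exp (t * ∑ j, D i j * b j))
        ≤ Real.log (2 + (Real.exp (2*Real.sqrt 2*t) + Real.exp (-(2*Real.sqrt 2*t)))) := by
      apply Real.log_le_log hZpos
      calc ∑ i, Real.exp (t * ∑ j, D i j * b j) ≤ ∑ j, Real.exp (t * b j) := h2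
        _ = Real.exp (t*ξ₁) + Real.exp (-(t*ξ₁)) + (Real.exp (t*ξ₂) + Real.exp (-(t*ξ₂))) := h3
        _ ≤ 2 + (Real.exp (2*Real.sqrt 2*t) + Real.exp (-(2*Real.sqrt 2*t))) := by
            linarith [h4]
    rw [e0, e1]
    exact le_trans hgibbs hlog1
  -- |β| ≤ 2√2
  have habs2 : |β| ≤ 2 * Real.sqrt 2 := by
    rw [hβ]
    have step1 : |∑ i, ∑ j, p i * b j * D i j| ≤ ∑ i, ∑ j, |p i * b j * D i j| :=
      (Finset.abs_sum_le_sum_abs _ _).trans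
        (Finset.sum_le_sum fun i _ => Finset.abs_sum_le_sum_abs _ _)
    have step2 : ∑ i, ∑ j, |p i * b j * D i j| ≤ ∑ i, ∑ j, p i * (2*Real.sqrt 2) * D i j := by
      apply Finset.sum_le_sum; intro i _
      apply Finset.sum_le_sum; intro j _
      rw [abs_mul, abs_mul, abs_of_nonneg (hp0 i), abs_of_nonneg (hD0 i j)]
      exact mul_le_mul_of_nonneg_right
        (mul_le_mul_of_nonneg_left (hbabs j) (hp0 i)) (hD0 i j)
    have step3 : ∑ i, ∑ j, p i * (2*Real.sqrt 2) * D i j = 2*Real.sqrt 2 := by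
      have e : ∀ i, ∑ j, p i * (2*Real.sqrt 2) * D i j = 2*Real.sqrt 2 * p i := by
        intro i
        rw [← Finset.mul_sum, hrow i, mul_one]; ring
      rw [Finset.sum_congr rfl (fun i _ => e i), ← Finset.mul_sum, hps, mul_one]
    linarith
  have hβ'abs : |β'| ≤ 1 := by
    rw [hβ'def, abs_div, abs_of_pos h22pos]
    exact div_le_one_of_le₀ habs2 (le_of_lt h22pos)
  have hβval : β = β' * (2*Real.sqrt 2) := by
    rw [hβ'def]; field_simp
  -- Part 1
  have part1 : vnEntropy hρ.1 ≤
      2 * Real.log 2 - (1 + β') * Real.log (1 + β') - (1 - β') * Real.log (1 - β') := by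
    rcases lt_or_eq_of_le hβ'abs with hlt | heq
    · obtain ⟨hb1, hb2⟩ := abs_lt.mp hlt
      set t0 := Real.log ((1+β')/(1-β')) / (2*Real.sqrt 2) with ht0
      have hst : 2*Real.sqrt 2 * t0 = Real.log ((1+β')/(1-β')) := by
        rw [ht0]; field_simp
      have hrpos : (0:ℝ) < (1+β')/(1-β') := div_pos (by linarith) (by linarith)
      have he1 : Real.exp (2*Real.sqrt 2*t0) = (1+β')/(1-β') := by
        rw [hst, Real.exp_log hrpos]
      have he2 : Real.exp (-(2*Real.sqrt 2*t0)) = (1-β')/(1+β') := by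
        rw [Real.exp_neg, he1, inv_div]
      have hmt := main t0
      rw [he1, he2] at hmt
      have h1p : (1+β') ≠ 0 := by linarith
      have h1m : (1-β') ≠ 0 := by linarith
      have harg : 2 + ((1+β')/(1-β') + (1-β')/(1+β')) = 4 / ((1+β')*(1-β')) := by
        field_simp
        ring
      rw [harg] at hmt
      have hlog4 : Real.log (4 / ((1+β')*(1-β')))
          = 2*Real.log 2 - Real.log (1+β') - Real.log (1-β') := by
        rw [Real.log_div (by norm_num) (mul_ne_zero h1p h1m),
          Real.log_mul h1p h1m,
          show (4:ℝ) = 2^2 by norm_num, Real.log_pow]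
        push_cast; ring
      rw [hlog4] at hmt
      have htb : t0 * β = β' * (Real.log (1+β') - Real.log (1-β')) := by
        rw [hβval, ht0, Real.log_div h1p h1m]
        field_simp
      rw [htb] at hmt
      nlinarith [hmt]
    · -- |β'| = 1
      have hFz : 2*Real.log 2 - (1+β')*Real.log (1+β') - (1-β')*Real.log (1-β') = 0 := by
        rcases (abs_eq (by norm_num : (0:ℝ) ≤ 1)).mp heq with h1 | h1 <;>
          rw [h1] <;> norm_num
      rw [hFz]
      have hβ'sq : β' ^ 2 = 1 := by
        rw [← sq_abs β', heq]; norm_num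
      have hub : ∀ u : ℝ, 0 ≤ u → vnEntropy hρ.1 ≤ 3 * Real.exp (-u) := by
        intro u hu
        have hmt := main (β' * u / (2*Real.sqrt 2))
        have h2s2 : 2*Real.sqrt 2 * (β'*u/(2*Real.sqrt 2)) = β'*u := by field_simp
        rw [h2s2] at hmt
        have htβ : (β'*u/(2*Real.sqrt 2)) * β = u := by
          rw [hβval]
          have e : β'*u/(2*Real.sqrt 2)*(β'*(2*Real.sqrt 2)) = β'^2 * u := by
            field_simp
          rw [e, hβ'sq, one_mul]
        rw [htβ] at hmt
        have hee : Real.exp (β'*u) + Real.exp (-(β'*u)) = Real.exp u + Real.exp (-u) := by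
          rcases (abs_eq (by norm_num : (0:ℝ) ≤ 1)).mp heq with h1 | h1
          · rw [h1, one_mul]
          · rw [h1, neg_one_mul, neg_neg, add_comm]
        rw [hee] at hmt
        have hprod : Real.exp u * Real.exp (-u) = 1 := by
          rw [← Real.exp_add]; simp
        have h1 : 2 + (Real.exp u + Real.exp (-u))
            = Real.exp u * (1 + (2*Real.exp (-u) + Real.exp (-u)^2)) := by
          linear_combination (-(2 + Real.exp (-u))) * hprod
        rw [h1, Real.log_mul (Real.exp_ne_zero u) (by positivity), Real.log_exp] at hmt
        have h2 := Real.log_le_sub_one_of_pos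
          (show (0:ℝ) < 1 + (2*Real.exp (-u) + Real.exp (-u)^2) by positivity)
        have h3 : Real.exp (-u) ≤ 1 := by
          rw [show (1:ℝ) = Real.exp 0 by rw [Real.exp_zero]]
          exact Real.exp_le_exp.2 (by linarith)
        nlinarith [Real.exp_pos (-u)]
      by_contra hc
      push_neg at hc
      have hS3 : 0 < vnEntropy hρ.1 := hc
      have hlogpos : 0 ≤ Real.log (6 / vnEntropy hρ.1) := by
        apply Real.log_nonneg
        rw [le_div_iff₀ hS3]
        have h30 := hub 0 le_rfl
        rw [neg_zero, Real.exp_zero, mul_one] at h30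
        linarith
      have := hub _ hlogpos
      rw [Real.exp_neg, Real.exp_log (div_pos (by norm_num) hS3)] at this
      rw [show (6 / vnEntropy hρ.1)⁻¹ = vnEntropy hρ.1 / 6 by rw [inv_div]] at this
      linarith
  refine ⟨part1, ?_⟩
  -- Part 2
  intro hS
  by_contra hgt
  push_neg at hgt
  have hb'gt : (Real.sqrt 2)⁻¹ < |β'| := by
    rw [hβ'def, abs_div, abs_of_pos h22pos, lt_div_iff₀ h22pos]
    have e : (Real.sqrt 2)⁻¹ * (2*Real.sqrt 2) = 2 := by
      field_simp
    linarith [e ▸ hgt]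
  have hinvpos : (0:ℝ) < (Real.sqrt 2)⁻¹ := by positivity
  have hinvle : (Real.sqrt 2)⁻¹ ≤ 1 := by
    rw [inv_le_one_iff₀]
    right
    nlinarith
  have hq0mem : (1 + (Real.sqrt 2)⁻¹)/2 ∈ Set.Icc (2⁻¹:ℝ) 1 := by
    constructor <;> [linarith; linarith]
  have hqmem : (1 + |β'|)/2 ∈ Set.Icc (2⁻¹:ℝ) 1 := by
    constructor <;> [linarith [abs_nonneg β']; linarith [hβ'abs]]
  have hanti := Real.binEntropy_strictAntiOn hq0mem hqmem (by linarith)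
  have hFeq : 2 * Real.log 2 - (1 + β') * Real.log (1 + β') - (1 - β') * Real.log (1 - β')
      = 2 * Real.binEntropy ((1 + |β'|)/2) := by
    have hle1 := abs_le.mp hβ'abs
    rcases abs_cases β' with ⟨ha, _⟩ | ⟨ha, _⟩
    · rw [ha]
      exact (two_binEntropy_eq β' hle1.1 hle1.2).symm
    · rw [ha, show (1 + -β')/2 = 1 - (1+β')/2 by ring, Real.binEntropy_one_sub]
      exact (two_binEntropy_eq β' hle1.1 hle1.2).symm
  rw [hFeq] at part1
  rw [← const_eq] at hS
  linarith
end
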